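/- There exists a constant C > 0 such that for every real x > 0 and every real t with 0 < t ≤ e^{-x²/2}, one has x · (-log(1-t))/t ≤ C · max(1, x). (Equivalently, writing G'(t) = -log(1-t)/(4π² t) for the derivative of G(t) = (1/(4π²)) Σ_{n=1}^∞ tⁿ/n², the quantity x·G'(t) is bounded by (C/(4π²))·max(1,x) whenever 0 < t ≤ e^{-x²/2}.) -/

import Mathlib

/-!
For `t ≤ 1/2` the ratio `-log(1-t)/t` is at most `1/(1-t) ≤ 2`. For larger `t`, the
constraint `t ≤ e^{-x²/2}` keeps `1 - t ≥ 1 - e^{-x²/2} ≥ x²/(x²+2) ≥ (x/(x+2))²`, hence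
`-log(1-t) ≤ 2 log(1 + 2/x) ≤ 4/x`, so `x · (-log(1-t))` stays bounded while `1/t < 2`.
-/

open Real

lemma neg_log_one_sub_le_div {t : ℝ} (ht : t < 1) : -log (1 - t) ≤ t / (1 - t) := by
  have h1t : 0 < 1 - t := by linarith
  have h := one_sub_inv_le_log_of_pos h1t
  have : (1 - t)⁻¹ - 1 = t / (1 - t) := by field_simp; ring
  linarith

lemma neg_log_one_sub_le_two_mul {t : ℝ} (h0 : 0 ≤ t) (ht : t ≤ 1 / 2) : -log (1 - t) ≤ 2 * t := by
  have h1t : 0 < 1 - t := by linarith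
  calc -log (1 - t) ≤ t / (1 - t) := neg_log_one_sub_le_div (by linarith)
    _ ≤ 2 * t := by rw [div_le_iff₀ h1t]; nlinarith

lemma div_one_add_le_one_sub_exp_neg {s : ℝ} (hs : 0 ≤ s) : s / (1 + s) ≤ 1 - exp (-s) := by
  have hexp : exp (-s) ≤ (1 + s)⁻¹ := by
    rw [exp_neg]
    exact inv_anti₀ (by linarith) (by linarith [add_one_le_exp s])
  have : s / (1 + s) = 1 - (1 + s)⁻¹ := by field_simp; ring
  linarith

lemma mul_neg_log_one_sub_le_four {x t : ℝ} (hx : 0 < x) (ht : t ≤ exp (-x ^ 2 / 2)) :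
    x * -log (1 - t) ≤ 4 := by
  have hgap : (x / (x + 2)) ^ 2 ≤ 1 - t := by
    have h := div_one_add_le_one_sub_exp_neg (s := x ^ 2 / 2) (by positivity)
    have : (x / (x + 2)) ^ 2 ≤ x ^ 2 / 2 / (1 + x ^ 2 / 2) := by
      rw [div_pow, div_div, div_le_div_iff₀ (by positivity) (by positivity)]
      nlinarith [pow_pos hx 3]
    rw [show -(x ^ 2 / 2) = -x ^ 2 / 2 by ring] at h
    linarith
  have hlog : -log (1 - t) ≤ 2 * log (1 + 2 / x) := by
    have hpos : 0 < (x / (x + 2)) ^ 2 := by positivity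
    have h := log_le_log hpos hgap
    have : log ((x / (x + 2)) ^ 2) = -(2 * log (1 + 2 / x)) := by
      rw [log_pow, show x / (x + 2) = (1 + 2 / x)⁻¹ by field_simp, log_inv]
      push_cast; ring
    linarith
  have hlog_le : log (1 + 2 / x) ≤ 2 / x := by
    linarith [log_le_sub_one_of_pos (show 0 < 1 + 2 / x by positivity)]
  calc x * -log (1 - t) ≤ x * (2 * (2 / x)) := by gcongr; linarith
    _ = 4 := by field_simp; ring

/-- there exists `C > 0` such that for all `x > 0` and
`0 < t ≤ e^{-x²/2}`, one has `x · (-log(1-t))/t ≤ C · max(1,x)`. -/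
theorem stmt_4 :
    ∃ C : ℝ, 0 < C ∧ ∀ x : ℝ, 0 < x → ∀ t : ℝ, 0 < t → t ≤ Real.exp (-x ^ 2 / 2) →
      x * (-Real.log (1 - t)) / t ≤ C * max 1 x := by
  refine ⟨8, by norm_num, fun x hx t ht hte => ?_⟩
  have h1 : (1 : ℝ) ≤ max 1 x := le_max_left 1 x
  rw [div_le_iff₀ ht]
  rcases le_or_gt t (1 / 2) with hsmall | hlarge
  · have hx_le : x ≤ max 1 x := le_max_right 1 x
    calc x * -log (1 - t) ≤ x * (2 * t) := by gcongr; exact neg_log_one_sub_le_two_mul ht.le hsmall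
      _ ≤ 8 * max 1 x * t := by nlinarith
  · calc x * -log (1 - t) ≤ 4 := mul_neg_log_one_sub_le_four hx hte
      _ ≤ 8 * max 1 x * t := by nlinarith
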